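/- arXiv:2406.18318 — 4 statements merged into one kernel-verified Lean document; each statement's English description precedes it below -/
import Mathlib

section
/- Let H be the Hermitian adjacency matrix of a mixed graph on a finite nonempty vertex type V, let d(v) be the degree of v (the number of vertices u with H v u ≠ 0), and let Δ = max over v of d(v). Then Real.sqrt Δ ≤ ρ(H) and ρ(H) ≤ Δ. -/
open Polynomial Filter

/-- A matrix `H` is the Hermitian adjacency matrix of a mixed graph: zero diagonal,
entries in `{0, 1, i, -i}`, and Hermitian. -/
def IsMixedAdj {V : Type*} (H : Matrix V V ℂ) : Prop :=
  (∀ v, H v v = 0) ∧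
  (∀ u v, H u v = 0 ∨ H u v = 1 ∨ H u v = Complex.I ∨ H u v = -Complex.I) ∧
  (∀ u v, H u v = star (H v u))

/-- The spectral radius of a matrix: the maximum of `|λ|` over its eigenvalues. -/
noncomputable def specRad {V : Type*} [Fintype V] [DecidableEq V] (H : Matrix V V ℂ) : ℝ :=
  sSup ((fun z => ‖z‖) '' spectrum ℂ H)

/-- The largest (real) eigenvalue of a Hermitian matrix. -/
noncomputable def lam1 {V : Type*} [Fintype V] [DecidableEq V] (H : Matrix V V ℂ) : ℝ :=
  sSup {x : ℝ | (x : ℂ) ∈ spectrum ℂ H}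

/-- The underlying simple graph of a mixed graph: `u ∼ v` iff `H u v ≠ 0`. -/
def underGraph {V : Type*} (H : Matrix V V ℂ) : SimpleGraph V :=
  SimpleGraph.fromRel fun u v => H u v ≠ 0

/-- The diameter of a finite simple graph. -/
noncomputable def gdiam {V : Type*} [Fintype V] (G : SimpleGraph V) : ℕ :=
  Finset.univ.sup fun p : V × V => G.dist p.1 p.2

/-- Degree of a vertex in a mixed graph. -/
noncomputable def mdeg {V : Type*} (H : Matrix V V ℂ) (v : V) : ℕ :=
  Nat.card {u // H v u ≠ 0}

/-- Maximum degree of a mixed graph. -/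
noncomputable def maxDeg {V : Type*} [Fintype V] (H : Matrix V V ℂ) : ℕ :=
  Finset.univ.sup (mdeg H)

/-- Adjacency matrix (over ℂ) of the path graph on `m` vertices. -/
def pathAdj (m : ℕ) : Matrix (Fin m) (Fin m) ℂ :=
  Matrix.of fun i j => if (i : ℕ) + 1 = (j : ℕ) ∨ (j : ℕ) + 1 = (i : ℕ) then 1 else 0

/-- `p_m`: characteristic polynomial of the path on `m` vertices (`p_0 = 1`). -/
noncomputable def pPoly (m : ℕ) : Polynomial ℂ := (pathAdj m).charpoly

/-- Build a Hermitian matrix on `Fin n` from a generator of "upper" entries. -/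
noncomputable def mkHerm (n : ℕ) (g : ℕ → ℕ → ℂ) : Matrix (Fin n) (Fin n) ℂ :=
  Matrix.of fun i j => g (i : ℕ) (j : ℕ) + star (g (j : ℕ) (i : ℕ))

/-- `C'_{n-1,n}`: imaginary `(n-1)`-cycle on `0,…,n-2` with a pendant vertex `n-1` at `0`. -/
noncomputable def CpPend (n : ℕ) : Matrix (Fin n) (Fin n) ℂ :=
  mkHerm n fun a b =>
    if a + 1 = b ∧ b ≤ n - 2 then 1
    else if a = n - 2 ∧ b = 0 then Complex.I
    else if a = 0 ∧ b = n - 1 then 1 else 0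

/-- `C'_{3,n}`: imaginary triangle on `0,1,2` with an undirected path `0,3,4,…,n-1`. -/
noncomputable def Cp3 (n : ℕ) : Matrix (Fin n) (Fin n) ℂ :=
  mkHerm n fun a b =>
    if (a = 0 ∧ b = 1) ∨ (a = 1 ∧ b = 2) ∨ (a = 0 ∧ b = 3) then 1
    else if a = 2 ∧ b = 0 then Complex.I
    else if 3 ≤ a ∧ a + 1 = b then 1 else 0

/-- `C'_{k,k+2}`: imaginary `k`-cycle on `0,…,k-1` with a pendant path `0,k,k+1`. -/
noncomputable def CpTail (k : ℕ) : Matrix (Fin (k + 2)) (Fin (k + 2)) ℂ :=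
  mkHerm (k + 2) fun a b =>
    if a + 1 = b ∧ b ≤ k - 1 then 1
    else if a = k - 1 ∧ b = 0 then Complex.I
    else if a = 0 ∧ b = k then 1
    else if a = k ∧ b = k + 1 then 1 else 0

/-- `D_{k,t}`: imaginary `k`-cycle with pendant vertices `k` at `0` and `k+1` at `t`. -/
noncomputable def Dkt (k t : ℕ) : Matrix (Fin (k + 2)) (Fin (k + 2)) ℂ :=
  mkHerm (k + 2) fun a b =>
    if a + 1 = b ∧ b ≤ k - 1 then 1
    else if a = k - 1 ∧ b = 0 then Complex.I
    else if a = 0 ∧ b = k then 1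
    else if a = t ∧ b = k + 1 then 1 else 0

/-- `C'_n`: the imaginary `n`-cycle on `ZMod n`. -/
noncomputable def CpCycle (n : ℕ) [NeZero n] : Matrix (ZMod n) (ZMod n) ℂ :=
  Matrix.of fun j l =>
    (if l = j + 1 then (if j = -1 then Complex.I else 1) else 0)
    + (if j = l + 1 then (if l = -1 then -Complex.I else 1) else 0)

/-- `C_n`: the undirected `n`-cycle. -/
noncomputable def Cund (n : ℕ) : Matrix (Fin n) (Fin n) ℂ :=
  mkHerm n fun a b => if a + 1 = b ∨ (a = n - 1 ∧ b = 0) then 1 else 0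

/-- `C''_n`: the negative `n`-cycle. -/
noncomputable def Cneg (n : ℕ) : Matrix (Fin n) (Fin n) ℂ :=
  mkHerm n fun a b =>
    if a + 1 = b ∧ b ≤ n - 2 then 1
    else if a = n - 2 ∧ b = n - 1 then Complex.I
    else if a = n - 1 ∧ b = 0 then Complex.I else 0

/-- `G''_{n-2,n/2}`: negative `(n-2)`-cycle with pendant edges at `v₁` and `v_{n/2}`. -/
noncomputable def Gpp (n : ℕ) : Matrix (Fin n) (Fin n) ℂ :=
  mkHerm n fun a b =>
    if a + 1 = b ∧ b ≤ n - 4 then 1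
    else if a = n - 4 ∧ b = n - 3 then Complex.I
    else if a = n - 3 ∧ b = 0 then Complex.I
    else if a = 0 ∧ b = n - 2 then 1
    else if a = n / 2 - 1 ∧ b = n - 1 then 1 else 0

/-- `U''_{k,m}`: negative `6`-cycle with pendant paths of `k` vertices at `v₁`
and `m` vertices at `v₄`. -/
noncomputable def Upp (k m : ℕ) : Matrix (Fin (6 + k + m)) (Fin (6 + k + m)) ℂ :=
  mkHerm (6 + k + m) fun a b =>
    if a + 1 = b ∧ b ≤ 4 then 1
    else if a = 4 ∧ b = 5 then Complex.I
    else if a = 5 ∧ b = 0 then Complex.I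
    else if a = 0 ∧ b = 6 ∧ 1 ≤ k then 1
    else if 6 ≤ a ∧ a + 1 = b ∧ b ≤ 5 + k then 1
    else if a = 3 ∧ b = 6 + k ∧ 1 ≤ m then 1
    else if 6 + k ≤ a ∧ a + 1 = b ∧ b ≤ 5 + k + m then 1 else 0

/-- `G''_{8,4}`: negative `8`-cycle with pendant edges at `v₁` and `v₄`. -/
noncomputable def Gpp84 : Matrix (Fin 10) (Fin 10) ℂ :=
  mkHerm 10 fun a b =>
    if a + 1 = b ∧ b ≤ 6 then 1
    else if a = 6 ∧ b = 7 then Complex.I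
    else if a = 7 ∧ b = 0 then Complex.I
    else if (a = 0 ∧ b = 8) ∨ (a = 3 ∧ b = 9) then 1 else 0

/-- `G''_{10,5}`: negative `10`-cycle with pendant edges at `v₁` and `v₅`. -/
noncomputable def Gpp105 : Matrix (Fin 12) (Fin 12) ℂ :=
  mkHerm 12 fun a b =>
    if a + 1 = b ∧ b ≤ 8 then 1
    else if a = 8 ∧ b = 9 then Complex.I
    else if a = 9 ∧ b = 0 then Complex.I
    else if (a = 0 ∧ b = 10) ∨ (a = 4 ∧ b = 11) then 1 else 0

/-- `U''_6`: negative `6`-cycle with a pendant path of 2 vertices at `v₁`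
and pendant edges at `v₃`, `v₅`. -/
noncomputable def Upp6 : Matrix (Fin 10) (Fin 10) ℂ :=
  mkHerm 10 fun a b =>
    if a + 1 = b ∧ b ≤ 4 then 1
    else if a = 4 ∧ b = 5 then Complex.I
    else if a = 5 ∧ b = 0 then Complex.I
    else if (a = 0 ∧ b = 6) ∨ (a = 6 ∧ b = 7) ∨ (a = 2 ∧ b = 8) ∨ (a = 4 ∧ b = 9) then 1 else 0

/-- `U''_8`: negative `8`-cycle with pendant paths of 2 vertices at `v₁` and `v₅`. -/
noncomputable def Upp8 : Matrix (Fin 12) (Fin 12) ℂ :=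
  mkHerm 12 fun a b =>
    if a + 1 = b ∧ b ≤ 6 then 1
    else if a = 6 ∧ b = 7 then Complex.I
    else if a = 7 ∧ b = 0 then Complex.I
    else if (a = 0 ∧ b = 8) ∨ (a = 8 ∧ b = 9) ∨ (a = 4 ∧ b = 10) ∨ (a = 10 ∧ b = 11) then 1
    else 0

/-- Two mixed graphs are switching isomorphic. -/
def IsSwitchIso {V₁ V₂ : Type*} (H₁ : Matrix V₁ V₁ ℂ) (H₂ : Matrix V₂ V₂ ℂ) : Prop :=
  ∃ (σ : V₁ ≃ V₂) (d : V₁ → ℂ),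
    (∀ v, d v = 1 ∨ d v = -1 ∨ d v = Complex.I ∨ d v = -Complex.I) ∧
    ((∀ u v, H₂ (σ u) (σ v) = (d u)⁻¹ * H₁ u v * d v) ∨
     (∀ u v, H₂ (σ u) (σ v) = (d u)⁻¹ * star (H₁ u v) * d v))

/-- `M` is switching isomorphic to an induced subgraph (principal submatrix) of `H`. -/
def IsSwitchSub {V U : Type*} (M : Matrix V V ℂ) (H : Matrix U U ℂ) : Prop :=
  ∃ f : V → U, Function.Injective f ∧ IsSwitchIso M (H.submatrix f f)

/-- `x` is the largest positive real root of `p`. -/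
def IsMaxPosRoot (p : Polynomial ℝ) (x : ℝ) : Prop :=
  0 < x ∧ p.eval x = 0 ∧ ∀ y : ℝ, 0 < y → p.eval y = 0 → y ≤ x

/-- The mixed graph obtained from `H` by attaching a pendant path of `n` new
vertices at `v`. -/
noncomputable def attachPath {V : Type*} [DecidableEq V] (H : Matrix V V ℂ) (v : V) (n : ℕ) :
    Matrix (V ⊕ Fin n) (V ⊕ Fin n) ℂ :=
  Matrix.of fun a b =>
    match a, b with
    | Sum.inl u, Sum.inl w => H u w
    | Sum.inl u, Sum.inr i => if u = v ∧ (i : ℕ) = 0 then 1 else 0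
    | Sum.inr i, Sum.inl u => if u = v ∧ (i : ℕ) = 0 then 1 else 0
    | Sum.inr i, Sum.inr j => if (i : ℕ) + 1 = (j : ℕ) ∨ (j : ℕ) + 1 = (i : ℕ) then 1 else 0


/-!
The upper bound is Gershgorin's theorem: every eigenvalue has modulus at most some row sum
`∑ u, ‖H v u‖ = d(v) ≤ Δ`. For the lower bound, `H` is Hermitian, so `ρ(H)` equals its
`ℓ²` operator norm, which is at least the Euclidean length `√Δ` of the column of `H` at a
vertex of maximum degree.
-/

lemma Matrix.norm_le_of_mem_spectrum_of_sum_row_le {K n : Type*} [NormedField K] [Fintype n]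
    [DecidableEq n] {A : Matrix n n K} {c : ℝ} (hrow : ∀ k, ∑ j, ‖A k j‖ ≤ c) {μ : K}
    (hμ : μ ∈ spectrum K A) : ‖μ‖ ≤ c := by
  rw [← Matrix.spectrum_toLin'] at hμ
  obtain ⟨k, hk⟩ := eigenvalue_mem_ball (Module.End.HasEigenvalue.of_mem_spectrum hμ)
  rw [Metric.mem_closedBall, dist_eq_norm] at hk
  calc ‖μ‖ ≤ ‖A k k‖ + ‖μ - A k k‖ := norm_le_norm_add_norm_sub' μ (A k k)
    _ ≤ ∑ j, ‖A k j‖ := by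
        rw [← Finset.add_sum_erase _ _ (Finset.mem_univ k)]
        gcongr
    _ ≤ c := hrow k

section specRad

variable {V : Type*} [Fintype V] [DecidableEq V]

lemma specRad_le {A : Matrix V V ℂ} {c : ℝ} (hc : 0 ≤ c)
    (h : ∀ μ ∈ spectrum ℂ A, ‖μ‖ ≤ c) : specRad A ≤ c :=
  Real.sSup_le (by rintro _ ⟨μ, hμ, rfl⟩; exact h μ hμ) hc

lemma norm_le_specRad {A : Matrix V V ℂ} {μ : ℂ} (hμ : μ ∈ spectrum ℂ A) : ‖μ‖ ≤ specRad A :=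
  le_csSup ((A.finite_spectrum.image _).bddAbove) ⟨μ, hμ, rfl⟩

open scoped Matrix.Norms.L2Operator in
lemma Matrix.IsHermitian.l2_opNorm_eq_specRad [Nonempty V] {A : Matrix V V ℂ}
    (hA : A.IsHermitian) : ‖A‖ = specRad A := by
  refine le_antisymm ?_ (specRad_le (norm_nonneg A) fun μ hμ ↦ spectrum.norm_le_norm_of_mem hμ)
  obtain ⟨μ, hμ, hμA⟩ := spectrum.exists_nnnorm_eq_spectralRadius A
  rw [hA.isSelfAdjoint.spectralRadius_eq_nnnorm, ENNReal.coe_inj] at hμA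
  rw [← coe_nnnorm, ← hμA, coe_nnnorm]
  exact norm_le_specRad hμ

end specRad

namespace IsMixedAdj

variable {V : Type*} {H : Matrix V V ℂ}

lemma isHermitian (hH : IsMixedAdj H) : H.IsHermitian :=
  Matrix.IsHermitian.ext fun u v ↦ (hH.2.2 u v).symm

lemma norm_apply (hH : IsMixedAdj H) (u v : V) : ‖H u v‖ = if H u v = 0 then 0 else 1 := by
  rcases hH.2.1 u v with h | h | h | h <;> simp [h]

lemma norm_apply_comm (hH : IsMixedAdj H) (u v : V) : ‖H u v‖ = ‖H v u‖ := by
  rw [hH.2.2 u v, norm_star]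

lemma sq_norm_apply (hH : IsMixedAdj H) (u v : V) : ‖H u v‖ ^ 2 = ‖H u v‖ := by
  rw [hH.norm_apply]
  split_ifs <;> norm_num

lemma sum_norm_row [Fintype V] (hH : IsMixedAdj H) (v : V) : ∑ u, ‖H v u‖ = mdeg H v := by
  simp only [hH.norm_apply, mdeg, Nat.card_eq_fintype_card, Fintype.card_subtype,
    Finset.sum_ite, Finset.sum_const_zero, Finset.sum_const, nsmul_eq_mul, mul_one, zero_add]

open scoped Matrix.Norms.L2Operator in
lemma sqrt_mdeg_le_specRad [Fintype V] [DecidableEq V] [Nonempty V] (hH : IsMixedAdj H)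
    (v : V) : √(mdeg H v) ≤ specRad H := by
  have h := H.l2_opNorm_mulVec (EuclideanSpace.single v 1)
  rw [hH.isHermitian.l2_opNorm_eq_specRad, PiLp.norm_single, norm_one, mul_one,
    EuclideanSpace.norm_eq] at h
  convert h using 2
  rw [← hH.sum_norm_row]
  refine Finset.sum_congr rfl fun u _ ↦ ?_
  simp only [PiLp.ofLp_single, Matrix.mulVec_single, MulOpposite.op_one, one_smul,
    PiLp.continuousLinearEquiv_symm_apply, Matrix.col_apply, hH.norm_apply_comm u v,
    hH.sq_norm_apply]

end IsMixedAdj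

/-- `√Δ ≤ ρ(H) ≤ Δ`. -/
theorem stmt0 {V : Type*} [Fintype V] [DecidableEq V] [Nonempty V]
    (H : Matrix V V ℂ) (hH : IsMixedAdj H) :
    Real.sqrt (maxDeg H : ℝ) ≤ specRad H ∧ specRad H ≤ (maxDeg H : ℝ) := by
  obtain ⟨v, -, hv⟩ := Finset.exists_mem_eq_sup Finset.univ Finset.univ_nonempty (mdeg H)
  have hrow (k : V) : ∑ j, ‖H k j‖ ≤ maxDeg H := by
    rw [hH.sum_norm_row]
    exact_mod_cast Finset.le_sup (Finset.mem_univ k)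
  refine ⟨?_, specRad_le (Nat.cast_nonneg _) fun μ hμ ↦
    Matrix.norm_le_of_mem_spectrum_of_sum_row_le hrow hμ⟩
  rw [maxDeg, hv]
  exact hH.sqrt_mdeg_le_specRad v
end

section
/- For every n ≥ 4, the spectral radius of the mixed graph C'_{3,n} is at most Real.sqrt (2 + Real.sqrt 5). -/
open Polynomial Filter

/-!
If `A *ᵥ v = μ • v` with `v ≠ 0`, then `μ * (star v ⬝ᵥ v) = star v ⬝ᵥ A *ᵥ v`, so it suffices to
bound the Hermitian form of `C'_{3,n}` by `c := r + r⁻¹` times `‖v‖²`, where `r = √φ`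
(then `c² = φ + 2 + φ⁻¹ = 2 + √5`). Each path edge `uv`, with `u` nearer the triangle, is
bounded by `r⁻¹|v_u|² + r|v_v|²`, so every vertex of the path collects at most `c`. The
imaginary triangle with diagonal weights `(r, c, c)` is bounded by an explicit sum of squares,
which exists only because of the phase `i`: for the undirected triangle the bound is false.
-/

open Finset Matrix ComplexConjugate Complex
open scoped goldenRatio ComplexOrder

namespace Matrix

theorem norm_le_of_mem_spectrum_of_norm_star_dotProduct_mulVec_le {𝕜 ι : Type*} [RCLike 𝕜]
    [Fintype ι] [DecidableEq ι] {A : Matrix ι ι 𝕜} {c : ℝ}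
    (hA : ∀ v : ι → 𝕜, ‖star v ⬝ᵥ A *ᵥ v‖ ≤ c * ‖star v ⬝ᵥ v‖) {μ : 𝕜}
    (hμ : μ ∈ spectrum 𝕜 A) : ‖μ‖ ≤ c := by
  rw [← AlgEquiv.spectrum_eq (toLinAlgEquiv' : Matrix ι ι 𝕜 ≃ₐ[𝕜] _)] at hμ
  obtain ⟨v, hv⟩ := (Module.End.HasEigenvalue.of_mem_spectrum hμ).exists_hasEigenvector
  have hAv : A *ᵥ v = μ • v := by rw [← toLinAlgEquiv'_apply]; exact hv.apply_eq_smul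
  have hvv : 0 < ‖star v ⬝ᵥ v‖ := norm_pos_iff.mpr (dotProduct_star_self_eq_zero.not.mpr hv.2)
  have := hA v
  rw [hAv, dotProduct_smul, smul_eq_mul, norm_mul] at this
  exact le_of_mul_le_mul_right this hvv

end Matrix

theorem star_dotProduct_self_eq_sum_normSq (n : ℕ) (w : ℕ → ℂ) :
    star (fun i : Fin n => w i) ⬝ᵥ (fun i : Fin n => w i)
      = ∑ a ∈ range n, (normSq (w a) : ℂ) := by
  simp only [dotProduct, Pi.star_apply, RCLike.star_def, normSq_eq_conj_mul_self]
  exact Fin.sum_univ_eq_sum_range (fun a => conj (w a) * w a) n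

noncomputable def upperForm (g : ℕ → ℕ → ℂ) (n : ℕ) (w : ℕ → ℂ) : ℂ :=
  ∑ a ∈ range n, ∑ b ∈ range n, conj (w a) * g a b * w b

theorem star_dotProduct_mkHerm_mulVec (n : ℕ) (g : ℕ → ℕ → ℂ) (w : ℕ → ℂ) :
    star (fun i : Fin n => w i) ⬝ᵥ (mkHerm n g *ᵥ fun i => w i) = 2 * (upperForm g n w).re := by
  have hconj : ∑ a ∈ range n, ∑ b ∈ range n, conj (w a) * conj (g b a) * w b
      = conj (upperForm g n w) := by
    rw [upperForm, Finset.sum_comm]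
    simp only [map_sum, map_mul, conj_conj]
    exact sum_congr rfl fun _ _ => sum_congr rfl fun _ _ => by ring
  rw [← ofReal_ofNat, ← ofReal_mul, ← add_conj, ← hconj, upperForm, ← sum_add_distrib]
  simp only [dotProduct, mulVec, mkHerm, of_apply, Pi.star_apply, RCLike.star_def, mul_sum]
  rw [← Fin.sum_univ_eq_sum_range]
  refine sum_congr rfl fun i _ => ?_
  rw [← sum_add_distrib, ← Fin.sum_univ_eq_sum_range]
  exact sum_congr rfl fun j _ => by ring

namespace Complex

theorem two_mul_re_conj_mul_le {t : ℝ} (ht : 0 < t) (a b : ℂ) :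
    2 * (conj a * b).re ≤ t⁻¹ * normSq a + t * normSq b := by
  have key : t⁻¹ * normSq a + t * normSq b - 2 * (conj a * b).re = t⁻¹ * normSq (a - t * b) := by
    simp only [normSq_apply, mul_re, mul_im, conj_re, conj_im, sub_re, sub_im, ofReal_re,
      ofReal_im]
    field_simp
    ring
  linarith [mul_nonneg (inv_nonneg.mpr ht.le) (normSq_nonneg (a - t * b))]

theorem abs_two_mul_re_conj_mul_le {t : ℝ} (ht : 0 < t) (a b : ℂ) :
    |2 * (conj a * b).re| ≤ t⁻¹ * normSq a + t * normSq b := by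
  refine abs_le.mpr ⟨?_, two_mul_re_conj_mul_le ht a b⟩
  have h := two_mul_re_conj_mul_le ht a (-b)
  rw [mul_neg, neg_re, normSq_neg] at h
  linarith

end Complex

namespace Cp3

noncomputable def sqrtGoldenRatio : ℝ := √φ

local notation "r" => sqrtGoldenRatio

theorem sqrtGoldenRatio_pos : 0 < r := Real.sqrt_pos.mpr Real.goldenRatio_pos

theorem sqrtGoldenRatio_sq : r ^ 2 = φ := Real.sq_sqrt Real.goldenRatio_pos.le

theorem sqrtGoldenRatio_pow_four : r ^ 4 = r ^ 2 + 1 := by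
  rw [show r ^ 4 = (r ^ 2) ^ 2 by ring, sqrtGoldenRatio_sq, Real.goldenRatio_sq]

theorem sqrt_two_add_sqrt_five : √(2 + √5) = r + r⁻¹ := by
  have hr := sqrtGoldenRatio_pos
  rw [Real.sqrt_eq_iff_mul_self_eq_of_pos (by positivity)]
  field_simp
  linear_combination sqrtGoldenRatio_pow_four + (1 - √5) * sqrtGoldenRatio_sq
    - (1 / 2) * Real.sq_sqrt (show (0:ℝ) ≤ 5 by norm_num)

theorem two_mul_re_triangle_le (z₀ z₁ z₂ : ℂ) :
    2 * (conj z₀ * z₁ + conj z₁ * z₂ + conj z₂ * I * z₀).re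
      ≤ r * normSq z₀ + (r + r⁻¹) * (normSq z₁ + normSq z₂) := by
  have hr := sqrtGoldenRatio_pos
  have key : r * normSq z₀ + (r + r⁻¹) * (normSq z₁ + normSq z₂)
      - 2 * (conj z₀ * z₁ + conj z₁ * z₂ + conj z₂ * I * z₀).re
      = r⁻¹ * normSq (r * z₀ - z₁ + I * z₂)
        + (r ^ 3)⁻¹ * normSq (((r ^ 2 : ℝ) : ℂ) * z₁ + (I - r) * z₂) := by
    simp only [normSq_apply, mul_re, mul_im, add_re, add_im, sub_re, sub_im, conj_re, conj_im,
      I_re, I_im, ofReal_re, ofReal_im]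
    field_simp
    linear_combination (z₂.re ^ 2 + z₂.im ^ 2) * sqrtGoldenRatio_pow_four
  have := add_nonneg (mul_nonneg (inv_nonneg.mpr hr.le) (normSq_nonneg (r * z₀ - z₁ + I * z₂)))
    (mul_nonneg (by positivity : 0 ≤ (r ^ 3)⁻¹)
      (normSq_nonneg (((r ^ 2 : ℝ) : ℂ) * z₁ + (I - r) * z₂)))
  linarith

/-- No diagonal switching negates the odd cycle, but conjugating and then negating `z₁` does. -/
theorem abs_two_mul_re_triangle_le (z₀ z₁ z₂ : ℂ) :
    |2 * (conj z₀ * z₁ + conj z₁ * z₂ + conj z₂ * I * z₀).re|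
      ≤ r * normSq z₀ + (r + r⁻¹) * (normSq z₁ + normSq z₂) := by
  refine abs_le.mpr ⟨?_, two_mul_re_triangle_le z₀ z₁ z₂⟩
  have h := two_mul_re_triangle_le (conj z₀) (-conj z₁) (conj z₂)
  simp only [map_neg, conj_conj, normSq_conj, normSq_neg, mul_re, mul_im, add_re, neg_re, neg_im,
    conj_re, conj_im, I_re, I_im] at h ⊢
  linarith

def upper : ℕ → ℕ → ℂ := fun a b =>
  if (a = 0 ∧ b = 1) ∨ (a = 1 ∧ b = 2) ∨ (a = 0 ∧ b = 3) then 1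
  else if a = 2 ∧ b = 0 then I
  else if 3 ≤ a ∧ a + 1 = b then 1 else 0

theorem eq_mkHerm_upper (n : ℕ) : Cp3 n = mkHerm n upper := rfl

theorem upper_of_four_le {a b : ℕ} (h : 4 ≤ a ∨ 4 ≤ b) :
    upper a b = if a + 1 = b then 1 else 0 := by
  unfold upper
  split_ifs <;> first | rfl | omega

theorem upperForm_upper_four (w : ℕ → ℂ) :
    upperForm upper 4 w = conj (w 0) * w 1 + conj (w 1) * w 2 + conj (w 2) * I * w 0
      + conj (w 0) * w 3 := by
  simp +decide only [upperForm, upper, sum_range_succ, sum_range_zero, ite_mul, mul_ite, mul_one,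
    mul_zero, zero_mul, zero_add, add_zero, ↓reduceIte]
  ring

theorem upperForm_upper_succ {n : ℕ} (hn : 4 ≤ n) (w : ℕ → ℂ) :
    upperForm upper (n + 1) w = upperForm upper n w + conj (w (n - 1)) * w n := by
  have hcol : ∑ a ∈ range n, conj (w a) * upper a n * w n = conj (w (n - 1)) * w n := by
    rw [sum_eq_single_of_mem (n - 1) (mem_range.mpr (by omega))]
    · rw [upper_of_four_le (Or.inr hn), if_pos (by omega), mul_one]
    · intro a _ ha
      rw [upper_of_four_le (Or.inr hn), if_neg (by omega), mul_zero, zero_mul]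
  have hrow : ∀ b ∈ range (n + 1), conj (w n) * upper n b * w b = 0 := fun b hb => by
    rw [upper_of_four_le (Or.inl hn), if_neg (by have := mem_range.mp hb; omega), mul_zero,
      zero_mul]
  rw [upperForm, sum_range_succ, sum_eq_zero hrow, add_zero]
  simp only [sum_range_succ, sum_add_distrib, hcol]
  rfl

/-- The weight `r⁻¹` kept in reserve at the last vertex pays for the next edge of the path. -/
theorem abs_two_mul_re_upperForm_add_le {n : ℕ} (hn : 4 ≤ n) (w : ℕ → ℂ) :
    |2 * (upperForm upper n w).re| + r⁻¹ * normSq (w (n - 1))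
      ≤ (r + r⁻¹) * ∑ a ∈ range n, normSq (w a) := by
  have hr := sqrtGoldenRatio_pos
  induction n, hn using Nat.le_induction with
  | base =>
    have htri := abs_two_mul_re_triangle_le (w 0) (w 1) (w 2)
    have hedge := abs_two_mul_re_conj_mul_le hr (w 0) (w 3)
    rw [upperForm_upper_four, add_re, mul_add]
    simp only [sum_range_succ, sum_range_zero]
    linarith [abs_add_le (2 * (conj (w 0) * w 1 + conj (w 1) * w 2 + conj (w 2) * I * w 0).re)
      (2 * (conj (w 0) * w 3).re)]
  | succ n hn ih =>
    have hedge := abs_two_mul_re_conj_mul_le hr (w (n - 1)) (w n)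
    rw [upperForm_upper_succ hn, add_re, mul_add, Nat.add_sub_cancel, sum_range_succ]
    linarith [abs_add_le (2 * (upperForm upper n w).re) (2 * (conj (w (n - 1)) * w n).re)]

theorem norm_star_dotProduct_mulVec_le {n : ℕ} (hn : 4 ≤ n) (v : Fin n → ℂ) :
    ‖star v ⬝ᵥ Cp3 n *ᵥ v‖ ≤ (r + r⁻¹) * ‖star v ⬝ᵥ v‖ := by
  obtain ⟨w, rfl⟩ : ∃ w : ℕ → ℂ, v = fun i : Fin n => w i :=
    ⟨fun a => if h : a < n then v ⟨a, h⟩ else 0, by simp⟩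
  rw [eq_mkHerm_upper, star_dotProduct_mkHerm_mulVec, star_dotProduct_self_eq_sum_normSq,
    ← ofReal_ofNat, ← ofReal_mul, ← ofReal_sum, norm_real, norm_real, Real.norm_eq_abs,
    Real.norm_of_nonneg (sum_nonneg fun a _ => normSq_nonneg (w a))]
  have := abs_two_mul_re_upperForm_add_le hn w
  have := mul_nonneg (inv_nonneg.mpr sqrtGoldenRatio_pos.le) (normSq_nonneg (w (n - 1)))
  linarith

end Cp3

/-- `ρ(C'_{3,n}) ≤ √(2+√5)`. -/
theorem stmt8 (n : ℕ) (hn : 4 ≤ n) :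
    specRad (Cp3 n) ≤ Real.sqrt (2 + Real.sqrt 5) := by
  rw [Cp3.sqrt_two_add_sqrt_five]
  refine Real.sSup_le ?_ (by positivity [Cp3.sqrtGoldenRatio_pos])
  rintro _ ⟨μ, hμ, rfl⟩
  exact norm_le_of_mem_spectrum_of_norm_star_dotProduct_mulVec_le
    (Cp3.norm_star_dotProduct_mulVec_le hn) hμ
end

section
/- For k ≥ 3 and 1 ≤ t ≤ k−1, let D_{k,t} be the mixed graph on Fin (k+2) consisting of the imaginary k-cycle on {0,…,k−1} (H i (i+1) = 1 for 0 ≤ i ≤ k−2 and H (k−1) 0 = Complex.I) together with a pendant vertex k joined to 0 (H 0 k = 1) and a pendant vertex k+1 joined to t (H t (k+1) = 1). Then the characteristic polynomial of D_{k,t} satisfies charpoly(D_{k,t}) = X·(X² − 2)·p_{k−1} − 2·X²·p_{k−2} + p_{t−1}·p_{k−1−t} in ℂ[X], where p_m denotes the characteristic polynomial of the adjacency matrix of the path graph on m vertices, with p_0 = 1. -/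
/-!
Expanding `det (X - D_{k,t})` along the pendant vertex `k+1` (attached at `t`) and then along the
pendant vertex `k` (attached at `0`) reduces the claim to three kinds of mixed graphs: paths, the
imaginary `k`-cycle, and the imaginary cycle with one vertex deleted. The last is a path with one
edge of weight `±i`; by the three-term recurrence, a path whose edge weights have modulus one has
the characteristic polynomial `p_{k-1}` of the plain path. For the cycle itself, adding the edge
of weight `i` to the path `0, …, k-1` changes `det (X - A)` by two cofactor terms, which are `±i`
times equal cofactors of a symmetric matrix and cancel, and by `i²` times the determinant for the
path with both end vertices deleted; hence the cycle has polynomial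
`p_k - p_{k-2} = X p_{k-1} - 2 p_{k-2}`.
-/

open Polynomial Filter

section CharpolyComputation

open Matrix

namespace Fin

theorem val_succAbove {n : ℕ} (p : Fin (n + 1)) (i : Fin n) :
    (p.succAbove i : ℕ) = if (i : ℕ) < p then (i : ℕ) else i + 1 := by
  by_cases h : (i : ℕ) < p
  · rw [succAbove_of_castSucc_lt _ _ (by simpa [lt_def] using h), if_pos h, val_castSucc]
  · rw [succAbove_of_le_castSucc _ _ (by simpa [le_def] using h), if_neg h, val_succ]

end Fin

namespace Matrix

variable {R : Type*} [CommRing R] {n : ℕ}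

theorem det_eq_of_pendant_last (M : Matrix (Fin (n + 2)) (Fin (n + 2)) R) (v : Fin (n + 1))
    (b c : R) (hrow : ∀ j, M (Fin.last _) j.castSucc = if j = v then b else 0)
    (hcol : ∀ i, M i.castSucc (Fin.last _) = if i = v then c else 0) :
    M.det = M (Fin.last _) (Fin.last _) * (M.submatrix Fin.castSucc Fin.castSucc).det
      - b * c
        * (M.submatrix (Fin.castSucc ∘ v.succAbove) (Fin.castSucc ∘ v.succAbove)).det := by
  have hminor : (M.submatrix Fin.castSucc v.castSucc.succAbove).det
      = (-1) ^ (v + n : ℕ) * c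
        * (M.submatrix (Fin.castSucc ∘ v.succAbove) (Fin.castSucc ∘ v.succAbove)).det := by
    have hlast : v.castSucc.succAbove (Fin.last n) = Fin.last (n + 1) := by
      rw [Fin.succAbove_castSucc_of_le _ _ (Fin.le_last v), Fin.succ_last]
    rw [det_succ_column _ (Fin.last n),
      Fintype.sum_eq_single v fun i hi => by simp [hlast, hcol, hi]]
    simp [hlast, hcol, Fin.succAbove_last, submatrix_submatrix, Function.comp_def]
  rw [det_succ_row M (Fin.last _), Fin.sum_univ_castSucc,
    Fintype.sum_eq_single v fun j hj => by simp [hrow, hj]]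
  simp only [Fin.succAbove_last, hrow, if_pos, hminor, Fin.val_last, Fin.val_castSucc]
  have hsign : (-1 : R) ^ (n + 1 + v : ℕ) * (-1) ^ (v + n : ℕ) = -1 := by
    rw [← pow_add]; exact Odd.neg_one_pow ⟨v + n, by ring⟩
  rw [← two_mul, pow_mul, neg_one_sq, one_pow, one_mul]
  linear_combination (b * c * (M.submatrix (Fin.castSucc ∘ v.succAbove)
    (Fin.castSucc ∘ v.succAbove)).det) * hsign

theorem det_updateRow_zero_single_updateRow_last_single (M : Matrix (Fin (n + 2)) (Fin (n + 2)) R) :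
    ((M.updateRow 0 (Pi.single (Fin.last _) 1)).updateRow (Fin.last _) (Pi.single 0 1)).det
      = -(M.submatrix (Fin.succ ∘ Fin.castSucc) (Fin.succ ∘ Fin.castSucc)).det := by
  have hrows : (M.updateRow 0 (Pi.single (Fin.last _) 1)).submatrix Fin.castSucc Fin.succ
      = (M.submatrix Fin.castSucc Fin.succ).updateRow 0 (Pi.single (Fin.last n) 1) := by
    ext i j
    refine Fin.cases ?_ (fun i => ?_) i
    · simp [Pi.single_apply, ← Fin.succ_last, Fin.succ_inj]
    · simp
  rw [← adjugate_apply, adjugate_fin_succ_eq_det_submatrix, Fin.succAbove_last,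
    Fin.succAbove_zero, hrows,
    ← adjugate_apply, adjugate_fin_succ_eq_det_submatrix, Fin.succAbove_zero,
    Fin.succAbove_last, submatrix_submatrix]
  simp only [Fin.val_last, Fin.val_zero, Function.comp_def, Fin.succ_castSucc]
  rw [← mul_assoc, ← pow_add, Odd.neg_one_pow ⟨n, by ring⟩, neg_one_mul]

theorem det_add_smul_single_sub_single_of_transpose_eq (M : Matrix (Fin (n + 2)) (Fin (n + 2)) R)
    (hM : Mᵀ = M) (a : R) :
    (M + a • (single 0 (Fin.last _) 1 - single (Fin.last _) 0 1)).det
      = M.det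
        + a ^ 2 * (M.submatrix (Fin.succ ∘ Fin.castSucc) (Fin.succ ∘ Fin.castSucc)).det := by
  set e₀ : Fin (n + 2) → R := Pi.single 0 1
  set eₗ : Fin (n + 2) → R := Pi.single (Fin.last _) 1
  have hne : Fin.last (n + 1) ≠ 0 := Fin.last_pos.ne'
  have hrows : M + a • (single 0 (Fin.last _) 1 - single (Fin.last _) 0 1)
      = (M.updateRow 0 (M 0 + a • eₗ)).updateRow (Fin.last _)
          (M (Fin.last _) + (-a) • e₀) := by
    ext i j
    by_cases hi0 : i = 0
    · subst hi0; simp [eₗ, Pi.single_apply, single_apply, hne.symm, eq_comm]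
    by_cases hil : i = Fin.last _
    · subst hil; simp [e₀, Pi.single_apply, single_apply, sub_eq_add_neg, eq_comm]
    · simp [hi0, hil, Ne.symm hi0, Ne.symm hil]
  have hupdate (A : Matrix (Fin (n + 2)) (Fin (n + 2)) R) (i : Fin (n + 2)) (x : Fin (n + 2) → R)
      (h : A i = x) : A.updateRow i x = A := h ▸ updateRow_eq_self A i
  have hadj : M.adjugate (Fin.last _) 0 = M.adjugate 0 (Fin.last _) := by
    rw [← transpose_apply M.adjugate, adjugate_transpose, hM]
  rw [hrows, det_updateRow_add, det_updateRow_smul, hupdate _ _ _ (updateRow_ne hne),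
    det_updateRow_add, det_updateRow_smul, hupdate _ _ _ rfl, updateRow_comm _ hne.symm,
    det_updateRow_add, det_updateRow_smul, hupdate _ _ _ (updateRow_ne hne.symm),
    updateRow_comm _ hne, det_updateRow_zero_single_updateRow_last_single,
    ← adjugate_apply, ← adjugate_apply, hadj]
  ring

theorem charmatrix_submatrix {m l : Type*} [Fintype m] [DecidableEq m] [Fintype l] [DecidableEq l]
    (A : Matrix m m R) {e : l → m} (he : Function.Injective e) :
    (A.submatrix e e).charmatrix = A.charmatrix.submatrix e e := by
  ext i j
  by_cases h : i = j
  · subst h; simp [charmatrix_apply_eq]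
  · simp [charmatrix_apply_ne _ _ _ h, charmatrix_apply_ne _ _ _ (he.ne h)]

theorem charpoly_eq_of_pendant_last (A : Matrix (Fin (n + 2)) (Fin (n + 2)) R) (v : Fin (n + 1))
    (b c : R) (hrow : ∀ j, A (Fin.last _) j.castSucc = if j = v then b else 0)
    (hcol : ∀ i, A i.castSucc (Fin.last _) = if i = v then c else 0)
    (hloop : A (Fin.last _) (Fin.last _) = 0) :
    A.charpoly = X * (A.submatrix Fin.castSucc Fin.castSucc).charpoly
      - C (b * c)
        * (A.submatrix (Fin.castSucc ∘ v.succAbove) (Fin.castSucc ∘ v.succAbove)).charpoly := by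
  rw [charpoly, det_eq_of_pendant_last _ v (-C b) (-C c), charmatrix_apply_eq, hloop,
    charpoly, charpoly, charmatrix_submatrix _ (Fin.castSucc_injective _),
    charmatrix_submatrix _ ((Fin.castSucc_injective _).comp (Fin.succAbove_right_injective))]
  · simp only [map_zero, sub_zero, map_mul]; ring
  · intro j
    rw [charmatrix_apply_ne _ _ _ (Fin.castSucc_lt_last j).ne', hrow]
    split_ifs <;> simp
  · intro i
    rw [charmatrix_apply_ne _ _ _ (Fin.castSucc_lt_last i).ne, hcol]
    split_ifs <;> simp

end Matrix

def weightedPathAdj (m : ℕ) (w : ℕ → ℂ) : Matrix (Fin m) (Fin m) ℂ :=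
  Matrix.of fun i j =>
    if (i : ℕ) + 1 = j then w i else if (j : ℕ) + 1 = i then star (w j) else 0

theorem weightedPathAdj_submatrix_castSucc (m : ℕ) (w : ℕ → ℂ) :
    (weightedPathAdj (m + 1) w).submatrix Fin.castSucc Fin.castSucc = weightedPathAdj m w := by
  ext i j; simp [weightedPathAdj]

theorem charpoly_weightedPathAdj_add_two (m : ℕ) (w : ℕ → ℂ) :
    (weightedPathAdj (m + 2) w).charpoly
      = X * (weightedPathAdj (m + 1) w).charpoly
        - C (star (w m) * w m) * (weightedPathAdj m w).charpoly := by
  rw [charpoly_eq_of_pendant_last _ (Fin.last m) (star (w m)) (w m),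
    weightedPathAdj_submatrix_castSucc, Fin.succAbove_last, ← submatrix_submatrix,
    weightedPathAdj_submatrix_castSucc, weightedPathAdj_submatrix_castSucc]
  · rintro ⟨j, hj⟩
    simp only [weightedPathAdj, of_apply, Fin.val_last, Fin.val_castSucc, Fin.ext_iff]
    split_ifs <;> subst_vars <;> first | rfl | omega
  · rintro ⟨i, hi⟩
    simp only [weightedPathAdj, of_apply, Fin.val_last, Fin.val_castSucc, Fin.ext_iff]
    split_ifs <;> subst_vars <;> first | rfl | omega
  · simp [weightedPathAdj]

theorem pathAdj_eq_weightedPathAdj (m : ℕ) : pathAdj m = weightedPathAdj m 1 := by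
  ext i j
  simp only [pathAdj, weightedPathAdj, of_apply, Pi.one_apply, star_one]
  split_ifs <;> simp_all

theorem pPoly_add_two (m : ℕ) : pPoly (m + 2) = X * pPoly (m + 1) - pPoly m := by
  simp [pPoly, pathAdj_eq_weightedPathAdj, charpoly_weightedPathAdj_add_two]

theorem charpoly_weightedPathAdj {w : ℕ → ℂ} (hw : ∀ i, star (w i) * w i = 1) (m : ℕ) :
    (weightedPathAdj m w).charpoly = pPoly m := by
  induction m using Nat.twoStepInduction with
  | zero => simp [pPoly]
  | one => simp [pPoly, pathAdj_eq_weightedPathAdj, charpoly, weightedPathAdj]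
  | more m ih₀ ih₁ =>
    rw [charpoly_weightedPathAdj_add_two, ih₀, ih₁, hw, map_one, one_mul, pPoly_add_two]

theorem charpoly_pathAdj_submatrix_succAbove {m : ℕ} (v : Fin (m + 1)) :
    ((pathAdj (m + 1)).submatrix v.succAbove v.succAbove).charpoly = pPoly v * pPoly (m - v) := by
  obtain ⟨a, ha⟩ := v
  obtain ⟨b, rfl⟩ : ∃ b, m = a + b := ⟨m - a, by omega⟩
  have hblocks : reindex finSumFinEquiv.symm finSumFinEquiv.symm
      ((pathAdj (a + b + 1)).submatrix (Fin.succAbove ⟨a, ha⟩) (Fin.succAbove ⟨a, ha⟩))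
      = fromBlocks (pathAdj a) 0 0 (pathAdj b) := by
    ext (i | i) (j | j) <;>
      simp only [pathAdj, reindex_apply, submatrix_apply, Equiv.symm_symm,
        finSumFinEquiv_apply_left, finSumFinEquiv_apply_right, of_apply, Fin.val_succAbove,
        Fin.val_castAdd, Fin.val_natAdd, fromBlocks_apply₁₁, fromBlocks_apply₁₂,
        fromBlocks_apply₂₁, fromBlocks_apply₂₂, Matrix.zero_apply] <;>
      split_ifs <;> (try simp [add_comm] at *) <;> omega
  rw [← charpoly_reindex finSumFinEquiv.symm, hblocks, charpoly_fromBlocks_zero₁₂,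
    Nat.add_sub_cancel_left]
  rfl

noncomputable def imagCycleAdj (n : ℕ) : Matrix (Fin (n + 1)) (Fin (n + 1)) ℂ :=
  pathAdj (n + 1) + Complex.I • (single (Fin.last n) 0 1 - single 0 (Fin.last n) 1)

theorem charpoly_imagCycleAdj (n : ℕ) :
    (imagCycleAdj (n + 1)).charpoly = X * pPoly (n + 1) - 2 * pPoly n := by
  have hchar : (imagCycleAdj (n + 1)).charmatrix = (pathAdj (n + 2)).charmatrix
      + C Complex.I • (single 0 (Fin.last _) 1 - single (Fin.last _) 0 1) := by
    ext i j : 1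
    by_cases h : i = j
    · subst h
      have : ¬ (Fin.last (n + 1) = i ∧ 0 = i) := fun h => Fin.last_pos.ne' (h.1.trans h.2.symm)
      simp [imagCycleAdj, charmatrix_apply_eq, this, and_comm]
    · simp only [imagCycleAdj, charmatrix_apply_ne _ _ _ h, single_apply, Matrix.add_apply,
        Matrix.smul_apply, Matrix.sub_apply]
      split_ifs <;> simp [add_comm]
  have hsymm : (pathAdj (n + 2)).charmatrixᵀ = (pathAdj (n + 2)).charmatrix := by
    rw [← charmatrix_transpose]
    congr 1
    ext i j
    simp only [pathAdj, transpose_apply, of_apply, or_comm]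
  have hinner : (pathAdj (n + 2)).submatrix (Fin.succ ∘ Fin.castSucc) (Fin.succ ∘ Fin.castSucc)
      = pathAdj n := by
    ext i j; simp [pathAdj]
  rw [charpoly, hchar, det_add_smul_single_sub_single_of_transpose_eq _ hsymm,
    ← charmatrix_submatrix _ ((Fin.succ_injective _).comp (Fin.castSucc_injective _)),
    hinner, ← C_pow, Complex.I_sq, map_neg, map_one]
  change pPoly (n + 2) + -1 * pPoly n = _
  rw [pPoly_add_two]; ring

theorem charpoly_imagCycleAdj_submatrix_succAbove {n : ℕ} (v : Fin (n + 1)) :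
    ((imagCycleAdj n).submatrix v.succAbove v.succAbove).charpoly = pPoly n := by
  obtain ⟨a, ha⟩ := v
  obtain ⟨b, rfl⟩ : ∃ b, n = a + b := ⟨n - a, by omega⟩
  -- `finAddFlip` lists the remaining vertices in path order `a+1, …, a+b, 0, …, a-1`.
  have hpath : reindex finAddFlip.symm finAddFlip.symm
      ((imagCycleAdj (a + b)).submatrix (Fin.succAbove ⟨a, ha⟩) (Fin.succAbove ⟨a, ha⟩))
      = weightedPathAdj (b + a) fun p => if p + 1 = b then Complex.I else 1 := by
    ext i j
    induction i using Fin.addCases <;> induction j using Fin.addCases <;>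
    simp only [imagCycleAdj, reindex_apply, Equiv.symm_symm, submatrix_apply, Matrix.add_apply,
      Matrix.smul_apply, Matrix.sub_apply, single_apply, pathAdj, weightedPathAdj, of_apply,
      Fin.ext_iff, Fin.val_last, Fin.val_zero, finAddFlip_apply_castAdd, finAddFlip_apply_natAdd,
      Fin.val_succAbove, Fin.val_castAdd, Fin.val_natAdd, Fin.is_lt, if_true, add_lt_iff_neg_left,
      Nat.not_lt_zero, if_false] <;>
    split_ifs <;> (try simp [add_comm] at *) <;> omega
  rw [← charpoly_reindex finAddFlip.symm, hpath, charpoly_weightedPathAdj, add_comm]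
  intro p
  split_ifs <;> simp

theorem imagCycleAdj_submatrix_succ (n : ℕ) :
    (imagCycleAdj n).submatrix Fin.succ Fin.succ = pathAdj n := by
  ext i j
  simp [imagCycleAdj, pathAdj, Fin.ext_iff]

theorem CpPend_submatrix_castSucc (n : ℕ) :
    (CpPend (n + 3)).submatrix Fin.castSucc Fin.castSucc = imagCycleAdj (n + 1) := by
  ext i j
  simp only [CpPend, mkHerm, imagCycleAdj, pathAdj, submatrix_apply, of_apply, Matrix.add_apply,
    Matrix.smul_apply, Matrix.sub_apply, single_apply, Fin.ext_iff, Fin.val_castSucc, Fin.val_last,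
    Fin.val_zero]
  split_ifs <;> first | rfl | omega | simp [add_comm] at *

theorem CpPend_last_castSucc (n : ℕ) (j : Fin (n + 2)) :
    CpPend (n + 3) (Fin.last _) j.castSucc = if j = 0 then 1 else 0 := by
  simp only [CpPend, mkHerm, of_apply, Fin.ext_iff, Fin.val_castSucc, Fin.val_last, Fin.val_zero]
  split_ifs <;> (try simp [add_comm] at *) <;> omega

theorem CpPend_castSucc_last (n : ℕ) (i : Fin (n + 2)) :
    CpPend (n + 3) i.castSucc (Fin.last _) = if i = 0 then 1 else 0 := by
  simp only [CpPend, mkHerm, of_apply, Fin.ext_iff, Fin.val_castSucc, Fin.val_last, Fin.val_zero]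
  split_ifs <;> (try simp [add_comm] at *) <;> omega

theorem CpPend_last_last (n : ℕ) : CpPend (n + 3) (Fin.last _) (Fin.last _) = 0 := by
  simp [CpPend, mkHerm]

theorem charpoly_CpPend (n : ℕ) :
    (CpPend (n + 3)).charpoly = X * (imagCycleAdj (n + 1)).charpoly - pPoly (n + 1) := by
  rw [charpoly_eq_of_pendant_last _ 0 1 1 (CpPend_last_castSucc n) (CpPend_castSucc_last n)
    (CpPend_last_last n), Fin.succAbove_zero, ← submatrix_submatrix, CpPend_submatrix_castSucc,
    imagCycleAdj_submatrix_succ, mul_one, map_one, one_mul, pPoly]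

theorem charpoly_CpPend_submatrix_succAbove {n : ℕ} (u : Fin (n + 1)) :
    ((CpPend (n + 3)).submatrix u.succ.castSucc.succAbove u.succ.castSucc.succAbove).charpoly
      = X * pPoly (n + 1) - pPoly u * pPoly (n - u) := by
  set A := (CpPend (n + 3)).submatrix u.succ.castSucc.succAbove u.succ.castSucc.succAbove
  have hlast : u.succ.castSucc.succAbove (Fin.last (n + 1)) = Fin.last (n + 2) := by
    rw [Fin.succAbove_castSucc_of_le _ _ (Fin.le_last _), Fin.succ_last]
  have hcycle : A.submatrix Fin.castSucc Fin.castSucc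
      = (imagCycleAdj (n + 1)).submatrix u.succ.succAbove u.succ.succAbove := by
    ext i j
    simp only [A, ← CpPend_submatrix_castSucc, submatrix_apply, Fin.castSucc_succAbove_castSucc]
  have hpath : (A.submatrix Fin.castSucc Fin.castSucc).submatrix (Fin.succAbove 0) (Fin.succAbove 0)
      = (pathAdj (n + 1)).submatrix u.succAbove u.succAbove := by
    ext i j
    simp [hcycle, ← imagCycleAdj_submatrix_succ]
  have hzero : ∀ j : Fin (n + 1), u.succ.succAbove j = 0 ↔ j = 0 :=
    fun j => Fin.succAbove_eq_zero_iff (Fin.succ_ne_zero u)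
  rw [charpoly_eq_of_pendant_last A 0 1 1, ← submatrix_submatrix, hpath, hcycle,
    charpoly_imagCycleAdj_submatrix_succAbove, charpoly_pathAdj_submatrix_succAbove, mul_one,
    map_one, one_mul]
  · intro j
    simp only [A, submatrix_apply, hlast, Fin.castSucc_succAbove_castSucc, CpPend_last_castSucc,
      hzero]
  · intro i
    simp only [A, submatrix_apply, hlast, Fin.castSucc_succAbove_castSucc, CpPend_castSucc_last,
      hzero]
  · simp only [A, submatrix_apply, hlast, CpPend_last_last]

theorem Dkt_submatrix_castSucc (k t : ℕ) :
    (Dkt k t).submatrix Fin.castSucc Fin.castSucc = CpPend (k + 1) := by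
  ext i j
  simp only [Dkt, CpPend, mkHerm, submatrix_apply, of_apply, Fin.val_castSucc,
    show k + 1 - 2 = k - 1 by omega, Nat.add_sub_cancel, i.isLt.ne, j.isLt.ne, and_false, if_false]

theorem Dkt_last_castSucc (k : ℕ) (v j : Fin (k + 1)) :
    Dkt k v (Fin.last _) j.castSucc = if j = v then 1 else 0 := by
  simp only [Dkt, mkHerm, of_apply, Fin.ext_iff, Fin.val_castSucc, Fin.val_last]
  split_ifs <;> (try simp [add_comm] at *) <;> omega

theorem Dkt_castSucc_last (k : ℕ) (v i : Fin (k + 1)) :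
    Dkt k v i.castSucc (Fin.last _) = if i = v then 1 else 0 := by
  simp only [Dkt, mkHerm, of_apply, Fin.ext_iff, Fin.val_castSucc, Fin.val_last]
  split_ifs <;> (try simp [add_comm] at *) <;> omega

theorem Dkt_last_last (k : ℕ) (v : Fin (k + 1)) : Dkt k v (Fin.last _) (Fin.last _) = 0 := by
  simp [Dkt, mkHerm, v.isLt.ne']

end CharpolyComputation

/-- charpoly identity for `D_{k,t}`. -/
theorem stmt10 (k t : ℕ) (hk : 3 ≤ k) (ht1 : 1 ≤ t) (ht2 : t ≤ k - 1) :
    (Dkt k t).charpoly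
      = X * (X ^ 2 - 2) * pPoly (k - 1) - 2 * X ^ 2 * pPoly (k - 2)
        + pPoly (t - 1) * pPoly (k - 1 - t) := by
  obtain ⟨n, rfl⟩ : ∃ n, k = n + 2 := ⟨k - 2, by omega⟩
  obtain ⟨s, rfl⟩ : ∃ s, t = s + 1 := ⟨t - 1, by omega⟩
  set u : Fin (n + 1) := ⟨s, by omega⟩
  rw [Matrix.charpoly_eq_of_pendant_last (Dkt (n + 2) (s + 1)) u.succ.castSucc 1 1
      (Dkt_last_castSucc _ u.succ.castSucc) (Dkt_castSucc_last _ u.succ.castSucc)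
      (Dkt_last_last _ u.succ.castSucc),
    ← Matrix.submatrix_submatrix, Dkt_submatrix_castSucc, charpoly_CpPend, charpoly_imagCycleAdj,
    charpoly_CpPend_submatrix_succAbove, show n + 2 - 1 - (s + 1) = n - s by omega,
    show n + 2 - 1 = n + 1 by omega, Nat.add_sub_cancel, Nat.add_sub_cancel, mul_one, map_one,
    one_mul]
  ring
end

section
/- For every k ≥ 5, the spectral radius of the mixed graph C'_{k,k+2} is strictly greater than Real.sqrt (2 + Real.sqrt 5). -/
open Polynomial Filter

/-!
The spectral radius of a Hermitian matrix dominates its largest eigenvalue, hence every Rayleigh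
quotient `x* H x / x* x`; phrased in the Loewner order, `ρ(H) ≤ c` gives `H ≤ c • 1`, which passes
to principal submatrices, so Rayleigh quotients of induced subgraphs are lower bounds too.
For `k ≥ 10` the vertices `0, …, 4, k - 4, …, k + 1` of `C'_{k,k+2}` induce one and the same tree,
a spider with legs of lengths `4, 4, 2`, and a single integer test vector gives it Rayleigh quotient
`8268 / 4003 > √(2 + √5)`. For `5 ≤ k ≤ 9` explicit Gaussian-integer test vectors on the whole
graph do the same.
-/

open Matrix
open scoped MatrixOrder ComplexOrder

section Rayleigh

variable {n m : Type*} [Fintype n] [DecidableEq n] [Fintype m] [DecidableEq m]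

theorem le_specRad_of_mem_spectrum_real {A : Matrix n n ℂ} {r : ℝ} (hr : r ∈ spectrum ℝ A) :
    r ≤ specRad A := by
  have hmem : (r : ℂ) ∈ spectrum ℂ A := by simpa using spectrum.algebraMap_mem ℂ hr
  calc r ≤ ‖(r : ℂ)‖ := by rw [Complex.norm_real, Real.norm_eq_abs]; exact le_abs_self r
    _ ≤ specRad A := le_csSup (A.finite_spectrum.image _).bddAbove ⟨_, hmem, rfl⟩

theorem posSemidef_smul_one_sub_of_specRad_le {A : Matrix n n ℂ} (hA : A.IsHermitian) {c : ℝ}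
    (hc : specRad A ≤ c) : (c • 1 - A).PosSemidef := by
  have hle : A ≤ algebraMap ℝ _ c := le_algebraMap_of_spectrum_le
    (fun r hr => (le_specRad_of_mem_spectrum_real hr).trans hc) hA.isSelfAdjoint
  rwa [Matrix.le_iff, Algebra.algebraMap_eq_smul_one] at hle

theorem lt_specRad_of_lt_rayleigh {A : Matrix n n ℂ} (hA : A.IsHermitian) {f : m → n}
    (hf : Function.Injective f) (x : m → ℂ) {c : ℝ}
    (h : c * (star x ⬝ᵥ x).re < (star x ⬝ᵥ (A.submatrix f f *ᵥ x)).re) : c < specRad A := by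
  by_contra! hc
  have hpsd := (posSemidef_smul_one_sub_of_specRad_le hA hc).submatrix f
  rw [show (c • 1 - A).submatrix f f = c • 1 - A.submatrix f f by
    rw [← submatrix_one f hf]; rfl] at hpsd
  have := hpsd.re_dotProduct_nonneg x
  rw [sub_mulVec, dotProduct_sub, smul_mulVec, one_mulVec, dotProduct_smul, map_sub] at this
  simp only [RCLike.re_to_complex, Complex.real_smul, Complex.re_ofReal_mul] at this
  linarith

theorem sqrt_two_add_sqrt_five_lt {q : ℝ} (hq : 0 < q) (h2 : 2 < q ^ 2)
    (h5 : 5 < (q ^ 2 - 2) ^ 2) : √(2 + √5) < q := by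
  have : √5 < q ^ 2 - 2 := (Real.sqrt_lt' (by linarith)).2 h5
  exact (Real.sqrt_lt' hq).2 (by linarith)

theorem sqrt_two_add_sqrt_five_lt_specRad {A : Matrix n n ℂ} (hA : A.IsHermitian) {f : m → n}
    (hf : Function.Injective f) (x : m → ℂ) {Q N : ℝ}
    (hQ : star x ⬝ᵥ (A.submatrix f f *ᵥ x) = Q) (hN : star x ⬝ᵥ x = N) (hN0 : 0 < N) (hQ0 : 0 < Q)
    (h2 : 2 < (Q / N) ^ 2) (h5 : 5 < ((Q / N) ^ 2 - 2) ^ 2) : √(2 + √5) < specRad A := by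
  refine lt_specRad_of_lt_rayleigh hA hf x ?_
  rw [hQ, hN, Complex.ofReal_re, Complex.ofReal_re, ← lt_div_iff₀ hN0]
  exact sqrt_two_add_sqrt_five_lt (div_pos hQ0 hN0) h2 h5

end Rayleigh

theorem mkHerm_isHermitian (n : ℕ) (g : ℕ → ℕ → ℂ) : (mkHerm n g).IsHermitian := by
  ext i j
  simp [mkHerm, conjTranspose_apply, add_comm]

-- The test vectors are rounded eigenvectors of the largest eigenvalue.
open Complex in
theorem sqrt_two_add_sqrt_five_lt_specRad_cpTail_of_le_nine {k : ℕ} (h5 : 5 ≤ k) (h9 : k ≤ 9) :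
    √(2 + √5) < specRad (CpTail k) := by
  have hH := mkHerm_isHermitian (k + 2)
  interval_cases k <;> [
    refine sqrt_two_add_sqrt_five_lt_specRad (hH _) Function.injective_id
      ![55, 40 + 8 * I, 28 + 17 * I, 17 + 28 * I, 8 + 40 * I, 35, 17]
      (Q := 20768) (N := 10013) ?_ ?_ ?_ ?_ ?_ ?_;
    refine sqrt_two_add_sqrt_five_lt_specRad (hH _) Function.injective_id
      ![54, 39 + 6 * I, 28 + 12 * I, 19 + 19 * I, 12 + 28 * I, 6 + 39 * I, 33, 16]
      (Q := 20740) (N := 9953) ?_ ?_ ?_ ?_ ?_ ?_;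
    refine sqrt_two_add_sqrt_five_lt_specRad (hH _) Function.injective_id
      ![53, 39 + 4 * I, 28 + 8 * I, 20 + 14 * I, 14 + 20 * I, 8 + 28 * I, 4 + 39 * I, 33, 16]
      (Q := 21126) (N := 10116) ?_ ?_ ?_ ?_ ?_ ?_;
    refine sqrt_two_add_sqrt_five_lt_specRad (hH _) Function.injective_id
      ![52, 38 + 3 * I, 28 + 6 * I, 20 + 10 * I, 14 + 14 * I, 10 + 20 * I, 6 + 28 * I,
        3 + 38 * I, 32, 15]
      (Q := 20680) (N := 9891) ?_ ?_ ?_ ?_ ?_ ?_;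
    refine sqrt_two_add_sqrt_five_lt_specRad (hH _) Function.injective_id
      ![52, 38 + 2 * I, 28 + 4 * I, 20 + 7 * I, 15 + 10 * I, 10 + 15 * I, 7 + 20 * I,
        4 + 28 * I, 2 + 38 * I, 32, 15]
      (Q := 20912) (N := 9997) ?_ ?_ ?_ ?_ ?_ ?_]
  all_goals norm_num [dotProduct, mulVec, mkHerm, CpTail, Fin.sum_univ_succ, Complex.ext_iff]

/-- The subgraph of `C'_{k,k+2}` induced on `0, …, 4, k - 4, …, k + 1` when `k ≥ 10`. -/
noncomputable def spider : Matrix (Fin 11) (Fin 11) ℂ :=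
  mkHerm 11 fun a b =>
    if (a = 0 ∧ b = 1) ∨ (a = 1 ∧ b = 2) ∨ (a = 2 ∧ b = 3) ∨ (a = 3 ∧ b = 4) ∨
       (a = 5 ∧ b = 6) ∨ (a = 6 ∧ b = 7) ∨ (a = 7 ∧ b = 8) ∨ (a = 0 ∧ b = 9) ∨
       (a = 9 ∧ b = 10) then 1
    else if a = 8 ∧ b = 0 then Complex.I else 0

def spiderEmbedding (m : ℕ) (j : Fin 11) : Fin (m + 10 + 2) :=
  ⟨if (j : ℕ) ≤ 4 then j else m + 1 + j, by split <;> omega⟩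

theorem spiderEmbedding_injective (m : ℕ) : Function.Injective (spiderEmbedding m) := by
  intro a b hab
  have h := congrArg Fin.val hab
  simp only [spiderEmbedding] at h
  ext
  split at h <;> split at h <;> omega

theorem cpTail_submatrix_spiderEmbedding (m : ℕ) :
    (CpTail (m + 10)).submatrix (spiderEmbedding m) (spiderEmbedding m) = spider := by
  ext ⟨a, ha⟩ ⟨b, hb⟩
  simp only [submatrix_apply, CpTail, spider, mkHerm, of_apply, spiderEmbedding]
  interval_cases a <;> interval_cases b <;> norm_num <;> omega

open Complex in
theorem sqrt_two_add_sqrt_five_lt_specRad_cpTail_add_ten (m : ℕ) :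
    √(2 + √5) < specRad (CpTail (m + 10)) := by
  refine sqrt_two_add_sqrt_five_lt_specRad (mkHerm_isHermitian _ _) (spiderEmbedding_injective m)
    ![33, 27, 19, 11, 5, 5 * I, 11 * I, 19 * I, 27 * I, 19, 9] (Q := 8268) (N := 4003)
    ?_ ?_ ?_ ?_ ?_ ?_
  rw [cpTail_submatrix_spiderEmbedding]
  all_goals norm_num [dotProduct, mulVec, spider, mkHerm, Fin.sum_univ_succ, Complex.ext_iff]

/-- `ρ(C'_{k,k+2}) > √(2+√5)` for `k ≥ 5`. -/
theorem stmt13 (k : ℕ) (hk : 5 ≤ k) :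
    Real.sqrt (2 + Real.sqrt 5) < specRad (CpTail k) := by
  obtain hk9 | hk10 := le_or_gt k 9
  · exact sqrt_two_add_sqrt_five_lt_specRad_cpTail_of_le_nine hk hk9
  · obtain ⟨m, rfl⟩ := Nat.exists_eq_add_of_le' hk10
    exact sqrt_two_add_sqrt_five_lt_specRad_cpTail_add_ten m
end
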